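/- For d ≥ 1, the simplex 2Δ_{2d−1} (the second dilate of the standard (2d−1)-dimensional simplex) is a Gorenstein polytope of dimension 2d−1 and degree d that is not a Cayley polytope. -/

import Mathlib

open Pointwise

/-- A point of `ℝ^d` is a lattice point if all its coordinates are integers. -/
def IsLatticePt {d : ℕ} (x : Fin d → ℝ) : Prop := ∀ i, ∃ z : ℤ, x i = (z : ℝ)

/-- A lattice polytope is the (non-empty) convex hull of finitely many lattice points. -/
def IsLatticePolytope {d : ℕ} (P : Set (Fin d → ℝ)) : Prop :=
  ∃ V : Finset (Fin d → ℝ), V.Nonempty ∧ (∀ v ∈ V, IsLatticePt v) ∧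
    P = convexHull ℝ (V : Set (Fin d → ℝ))

/-- The dimension of a polytope: the dimension of the direction of its affine hull. -/
noncomputable def polyDim {d : ℕ} (P : Set (Fin d → ℝ)) : ℕ :=
  Module.finrank ℝ (affineSpan ℝ P).direction

/-- A polytope is hollow if its relative interior contains no lattice point. -/
def IsHollow {d : ℕ} (P : Set (Fin d → ℝ)) : Prop :=
  ∀ x ∈ intrinsicInterior ℝ P, ¬ IsLatticePt x

/-- A facet of `P`: a non-empty exposed face of dimension `dim P - 1`. -/
def IsFacet {d : ℕ} (P F : Set (Fin d → ℝ)) : Prop :=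
  IsExposed ℝ P F ∧ F.Nonempty ∧ polyDim F + 1 = polyDim P

/-- An affine functional is integral on `P` if it takes integer values on all
lattice points of the affine hull of `P`. -/
def IsIntegralOn {d : ℕ} (P : Set (Fin d → ℝ)) (u : (Fin d → ℝ) →ᵃ[ℝ] ℝ) : Prop :=
  ∀ y ∈ affineSpan ℝ P, IsLatticePt y → ∃ z : ℤ, u y = (z : ℝ)

/-- `P` is reflexive: there is a lattice point `x` in the relative interior of `P`
such that every facet of `P` has lattice distance one from `x`, i.e. for every facet `F`
there is an integral affine functional that is constant on `F` and exceeds its value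
at `x` by exactly `1`. -/
def IsReflexivePolytope {d : ℕ} (P : Set (Fin d → ℝ)) : Prop :=
  ∃ x ∈ intrinsicInterior ℝ P, IsLatticePt x ∧
    ∀ F : Set (Fin d → ℝ), IsFacet P F →
      ∃ u : (Fin d → ℝ) →ᵃ[ℝ] ℝ, IsIntegralOn P u ∧ ∀ f ∈ F, u f = u x + 1

/-- `P` is Gorenstein if some positive integer multiple `r • P` is reflexive. -/
def IsGorenstein {d : ℕ} (P : Set (Fin d → ℝ)) : Prop :=
  ∃ r : ℕ, 0 < r ∧ IsReflexivePolytope ((r : ℝ) • P)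

/-- `P` is Gorenstein of codegree `r` if `r • P` is reflexive (`r` positive). -/
def IsGorensteinOfCodeg {d : ℕ} (P : Set (Fin d → ℝ)) (r : ℕ) : Prop :=
  0 < r ∧ IsReflexivePolytope ((r : ℝ) • P)

/-- The codegree of `P`: the smallest positive integer `r` such that `r • P` is not hollow. -/
noncomputable def polyCodeg {d : ℕ} (P : Set (Fin d → ℝ)) : ℕ :=
  sInf {r : ℕ | 0 < r ∧ ¬ IsHollow ((r : ℝ) • P)}

/-- The degree of `P`: `dim P + 1 - codeg P`. -/
noncomputable def polyDeg {d : ℕ} (P : Set (Fin d → ℝ)) : ℕ :=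
  polyDim P + 1 - polyCodeg P

/-- Unimodular equivalence of lattice polytopes: an affine map carrying `P` onto `Q`,
with an affine inverse on affine hulls, such that both maps preserve lattice points of
the affine hulls. -/
def LatticeIso {d e : ℕ} (P : Set (Fin d → ℝ)) (Q : Set (Fin e → ℝ)) : Prop :=
  ∃ (f : (Fin d → ℝ) →ᵃ[ℝ] (Fin e → ℝ)) (g : (Fin e → ℝ) →ᵃ[ℝ] (Fin d → ℝ)),
    f '' P = Q ∧ g '' Q = P ∧
    (∀ x ∈ affineSpan ℝ P, g (f x) = x) ∧ (∀ y ∈ affineSpan ℝ Q, f (g y) = y) ∧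
    (∀ x ∈ affineSpan ℝ P, IsLatticePt x → IsLatticePt (f x)) ∧
    (∀ y ∈ affineSpan ℝ Q, IsLatticePt y → IsLatticePt (g y))

/-- The lattice pyramid `conv(P' × {0}, (0,1))` over `P' ⊆ ℝ^m`. -/
def pyramidOver {m : ℕ} (P' : Set (Fin m → ℝ)) : Set (Fin (m + 1) → ℝ) :=
  convexHull ℝ ((fun x => Fin.snoc x (0 : ℝ)) '' P' ∪ {Fin.snoc (0 : Fin m → ℝ) (1 : ℝ)})

/-- `P` is a lattice pyramid if it is a single lattice point or is isomorphic to a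
lattice pyramid over a lattice polytope. -/
def IsLatticePyramid {d : ℕ} (P : Set (Fin d → ℝ)) : Prop :=
  (∃ x : Fin d → ℝ, IsLatticePt x ∧ P = {x}) ∨
  ∃ (m : ℕ) (P' : Set (Fin m → ℝ)), IsLatticePolytope P' ∧ LatticeIso P (pyramidOver P')

/-- The Cayley polytope `P_1 * ⋯ * P_l ⊆ ℝ^{n+l}` of `P_1, …, P_l ⊆ ℝ^n`:
the convex hull of the sets `P_i × {e_i}`. -/
def cayley {n l : ℕ} (P : Fin l → Set (Fin n → ℝ)) : Set (Fin (n + l) → ℝ) :=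
  convexHull ℝ (⋃ i : Fin l, (fun x => Fin.append x (Pi.single i (1 : ℝ))) '' P i)

/-- The Cayley polytope `F * G ⊆ ℝ^{n+2}` of two polytopes `F, G ⊆ ℝ^n`. -/
def cayleyTwo {n : ℕ} (F G : Set (Fin n → ℝ)) : Set (Fin (n + 2) → ℝ) :=
  convexHull ℝ
    ((fun x => Fin.append x ![(1 : ℝ), 0]) '' F ∪ (fun x => Fin.append x ![(0 : ℝ), 1]) '' G)

/-- `P` is a Cayley join of `F` and `G` if `P ≅ F * G` and `dim F + dim G = dim P - 1`. -/
def IsCayleyJoin {d n : ℕ} (P : Set (Fin d → ℝ)) (F G : Set (Fin n → ℝ)) : Prop :=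
  LatticeIso P (cayleyTwo F G) ∧ polyDim F + polyDim G + 1 = polyDim P

/-- `P` is reducible with factors `F` and `G`: a Cayley join with
`codeg F + codeg G = codeg P`. -/
def IsReducibleWith {d n : ℕ} (P : Set (Fin d → ℝ)) (F G : Set (Fin n → ℝ)) : Prop :=
  IsCayleyJoin P F G ∧ polyCodeg F + polyCodeg G = polyCodeg P

/-- `P` is reducible: it is a single lattice point (by convention) or is reducible
with some factors `F` and `G` which are lattice polytopes. -/
def IsReducible {d : ℕ} (P : Set (Fin d → ℝ)) : Prop :=
  (∃ x : Fin d → ℝ, IsLatticePt x ∧ P = {x}) ∨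
  ∃ (n : ℕ) (F G : Set (Fin n → ℝ)), IsLatticePolytope F ∧ IsLatticePolytope G ∧
    IsReducibleWith P F G

/-- `P` is a Cayley polytope: a single lattice point, or isomorphic to a Cayley polytope
of `l > 1` lattice polytopes. -/
def IsCayleyPolytope {d : ℕ} (P : Set (Fin d → ℝ)) : Prop :=
  (∃ x : Fin d → ℝ, IsLatticePt x ∧ P = {x}) ∨
  ∃ (n l : ℕ) (Q : Fin l → Set (Fin n → ℝ)), 1 < l ∧ (∀ i, IsLatticePolytope (Q i)) ∧
    LatticeIso P (cayley Q)

/-- `P` is IDP if for every `k ≥ 2` every lattice point of `k • P` is a sum of `k`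
lattice points of `P`. -/
def IsIDP {d : ℕ} (P : Set (Fin d → ℝ)) : Prop :=
  ∀ k : ℕ, 2 ≤ k → ∀ x : Fin d → ℝ, IsLatticePt x → x ∈ (k : ℝ) • P →
    ∃ p : Fin k → (Fin d → ℝ), (∀ i, p i ∈ P ∧ IsLatticePt (p i)) ∧ x = ∑ i, p i

/-- The standard simplex `Δ_s = conv(0, e_1, …, e_s) ⊆ ℝ^s`. -/
def stdSimplexLP (s : ℕ) : Set (Fin s → ℝ) :=
  convexHull ℝ (insert 0 (Set.range fun i : Fin s => Pi.single i (1 : ℝ)))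

/-- The product of `F ⊆ ℝ^m` and `G ⊆ ℝ^n` inside `ℝ^{m+n}`. -/
def prodPoly {m n : ℕ} (F : Set (Fin m → ℝ)) (G : Set (Fin n → ℝ)) : Set (Fin (m + n) → ℝ) :=
  (fun p : (Fin m → ℝ) × (Fin n → ℝ) => Fin.append p.1 p.2) '' (F ×ˢ G)

/-- The free join `conv(F × 0 × {0} ∪ 0 × G × {1}) ⊆ ℝ^m × ℝ^n × ℝ`. -/
def freeJoin {m n : ℕ} (F : Set (Fin m → ℝ)) (G : Set (Fin n → ℝ)) :
    Set (Fin (m + n + 1) → ℝ) :=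
  convexHull ℝ
    ((fun x => Fin.snoc (Fin.append x (0 : Fin n → ℝ)) (0 : ℝ)) '' F ∪
     (fun y => Fin.snoc (Fin.append (0 : Fin m → ℝ) y) (1 : ℝ)) '' G)


open Set in
lemma stdSimplexLP_eq {s : ℕ} (hs : 0 < s) :
    stdSimplexLP s = {x : Fin s → ℝ | (∀ i, 0 ≤ x i) ∧ ∑ i, x i ≤ 1} := by
  have hne : (Set.range fun i : Fin s => Pi.single i (1 : ℝ)).Nonempty :=
    ⟨_, ⟨⟨0, hs⟩, rfl⟩⟩
  have hbs : convexHull ℝ (Set.range fun i : Fin s => Pi.single i (1 : ℝ))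
      = stdSimplex ℝ (Fin s) := by
    have h1 : (fun (i j : Fin s) => @ite ℝ (i = j) (instDecidableEqFin s i j) 1 0)
        = fun i => Pi.single i (1:ℝ) := by
      funext i j; by_cases h : i = j <;> simp [h, Pi.single_apply]
    rw [← h1]
    exact convexHull_basis_eq_stdSimplex (R := ℝ) (Fin s)
  rw [stdSimplexLP, convexHull_insert hne, hbs]
  ext x
  rw [mem_convexJoin]
  constructor
  · rintro ⟨a, ha, b, hb, hx⟩
    rw [mem_singleton_iff] at ha; subst ha
    rw [segment_eq_image] at hx
    obtain ⟨t, ht, rfl⟩ := hx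
    simp only [smul_zero, zero_add]
    constructor
    · intro i
      exact mul_nonneg ht.1 (hb.1 i)
    · have : ∑ i, (t • b) i = t := by
        simp only [Pi.smul_apply, smul_eq_mul, ← Finset.mul_sum, hb.2, mul_one]
      rw [this]; exact ht.2
  · rintro ⟨hx0, hx1⟩
    set t := ∑ i, x i with hts
    have ht0 : 0 ≤ t := Finset.sum_nonneg fun i _ => hx0 i
    rcases eq_or_lt_of_le ht0 with h | h
    · have hx : x = 0 := by
        funext i
        exact le_antisymm (by
          have := Finset.single_le_sum (f := x) (fun j _ => hx0 j) (Finset.mem_univ i)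
          linarith [this, h.symm]) (hx0 i) |>.symm ▸ rfl
      refine ⟨0, rfl, Pi.single ⟨0, hs⟩ (1:ℝ), ?_, ?_⟩
      · constructor
        · intro j; by_cases hj : j = ⟨0, hs⟩ <;> simp [Pi.single_apply, hj]
        · simp [Pi.single_apply]
      · rw [segment_eq_image]
        exact ⟨0, by norm_num, by simp [hx]⟩
    · refine ⟨0, rfl, t⁻¹ • x, ⟨?_, ?_⟩, ?_⟩
      · intro i; exact mul_nonneg (inv_nonneg.2 ht0) (hx0 i)
      · simp only [Pi.smul_apply, smul_eq_mul, ← Finset.mul_sum]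
        field_simp
        exact hts.symm
      · rw [segment_eq_image]
        refine ⟨t, ⟨ht0, hx1⟩, ?_⟩
        simp only [smul_zero, zero_add, smul_smul]
        rw [mul_inv_cancel₀ (ne_of_gt h), one_smul]

lemma smul_stdSimplexLP {s : ℕ} (hs : 0 < s) {c : ℝ} (hc : 0 < c) :
    c • stdSimplexLP s = {x : Fin s → ℝ | (∀ i, 0 ≤ x i) ∧ ∑ i, x i ≤ c} := by
  ext x
  rw [Set.mem_smul_set_iff_inv_smul_mem₀ (ne_of_gt hc), stdSimplexLP_eq hs]
  simp only [Set.mem_setOf_eq, Pi.smul_apply, smul_eq_mul]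
  rw [← Finset.mul_sum]
  have hc' : c ≠ 0 := ne_of_gt hc
  constructor
  · rintro ⟨h0, h1⟩
    constructor
    · intro i
      have h2 := mul_le_mul_of_nonneg_left (h0 i) hc.le
      rw [mul_zero, ← mul_assoc, mul_inv_cancel₀ hc', one_mul] at h2
      exact h2
    · have h2 := mul_le_mul_of_nonneg_left h1 hc.le
      rw [mul_one, ← mul_assoc, mul_inv_cancel₀ hc', one_mul] at h2
      exact h2
  · rintro ⟨h0, h1⟩
    refine ⟨fun i => mul_nonneg (inv_nonneg.2 hc.le) (h0 i), ?_⟩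
    have h2 := mul_le_mul_of_nonneg_left h1 (inv_nonneg.2 hc.le)
    rwa [inv_mul_cancel₀ hc'] at h2

lemma affineSpan_dilate_top {s : ℕ} (hs : 0 < s) {c : ℝ} (hc : 0 < c) :
    affineSpan ℝ (c • stdSimplexLP s) = ⊤ := by
  rw [smul_stdSimplexLP hs hc]
  set S : Set (Fin s → ℝ) := {x | (∀ i, 0 ≤ x i) ∧ ∑ i, x i ≤ c} with hS
  have h0 : (0 : Fin s → ℝ) ∈ S := ⟨fun i => le_refl 0, by simp [hc.le]⟩
  have he : ∀ i : Fin s, c • (Pi.single i (1:ℝ) : Fin s → ℝ) ∈ S := by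
    intro i
    constructor
    · intro j
      by_cases h : j = i <;> simp [Pi.single_apply, h, hc.le]
    · simp [Pi.single_apply]
  rw [AffineSubspace.affineSpan_eq_top_iff_vectorSpan_eq_top_of_nonempty ℝ (Fin s → ℝ) _ ⟨0, h0⟩]
  rw [eq_top_iff, ← (Pi.basisFun ℝ (Fin s)).span_eq, Submodule.span_le]
  rintro - ⟨i, rfl⟩
  have hv : c • (Pi.single i (1:ℝ) : Fin s → ℝ) - 0 ∈ vectorSpan ℝ S := by
    simpa using vsub_mem_vectorSpan ℝ (he i) h0
  simp only [sub_zero] at hv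
  have := Submodule.smul_mem (vectorSpan ℝ S) c⁻¹ hv
  rw [smul_smul, inv_mul_cancel₀ (ne_of_gt hc), one_smul] at this
  simpa [Pi.basisFun_apply] using this

lemma intrinsicInterior_eq_interior_of_top {n : ℕ} {s : Set (Fin n → ℝ)}
    (h : affineSpan ℝ s = ⊤) : intrinsicInterior ℝ s = interior s := by
  refine subset_antisymm ?_ interior_subset_intrinsicInterior
  rintro x ⟨y, hy, rfl⟩
  have hopen : IsOpen ((affineSpan ℝ s : Set (Fin n → ℝ))) := by
    rw [h]; exact isOpen_univ
  have hmap := hopen.isOpenEmbedding_subtypeVal.isOpenMap.image_interior_subset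
    (Subtype.val ⁻¹' s)
  have hx := hmap (Set.mem_image_of_mem _ hy)
  rwa [Subtype.image_preimage_coe, Set.inter_eq_right.2 (by rw [h]; exact fun z _ => trivial)]
    at hx

lemma interior_dilate {s : ℕ} (hs : 0 < s) {c : ℝ} (hc : 0 < c) :
    interior (c • stdSimplexLP s) = {x : Fin s → ℝ | (∀ i, 0 < x i) ∧ ∑ i, x i < c} := by
  rw [smul_stdSimplexLP hs hc]
  apply subset_antisymm
  · intro x hx
    have hnear : ∀ v : Fin s → ℝ, ∃ t : ℝ, 0 < t ∧
        x + t • v ∈ {x : Fin s → ℝ | (∀ i, 0 ≤ x i) ∧ ∑ i, x i ≤ c} := by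
      intro v
      have hcont : Filter.Tendsto (fun t : ℝ => x + t • v) (nhds 0) (nhds x) := by
        have : Filter.Tendsto (fun t : ℝ => t • v) (nhds 0) (nhds ((0:ℝ) • v)) :=
          (continuous_id.smul continuous_const).tendsto 0
        rw [zero_smul] at this
        simpa using (tendsto_const_nhds.add this)
      have hev : ∀ᶠ t : ℝ in nhds 0, x + t • v ∈
          interior {x : Fin s → ℝ | (∀ i, 0 ≤ x i) ∧ ∑ i, x i ≤ c} :=
        hcont.eventually (isOpen_interior.mem_nhds (by simpa using hx))
      have hev' := hev.filter_mono (nhdsWithin_le_nhds (s := Set.Ioi (0:ℝ)))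
      obtain ⟨t, ht, h2⟩ := (hev'.and (eventually_mem_nhdsWithin)).exists
      exact ⟨t, h2, interior_subset ht⟩
    constructor
    · intro i
      obtain ⟨t, ht, h1, -⟩ := hnear (-(Pi.single i (1:ℝ)))
      have := h1 i
      simp [Pi.single_apply] at this
      linarith
    · obtain ⟨i0⟩ : Nonempty (Fin s) := ⟨⟨0, hs⟩⟩
      obtain ⟨t, ht, -, h2⟩ := hnear (Pi.single i0 (1:ℝ))
      have hsum : ∑ i, (x + t • (Pi.single i0 (1:ℝ) : Fin s → ℝ)) i = (∑ i, x i) + t := by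
        simp only [Pi.add_apply, Pi.smul_apply, smul_eq_mul, Finset.sum_add_distrib]
        simp [Pi.single_apply]
      rw [hsum] at h2
      linarith
  · apply interior_maximal
    · intro x hx
      exact ⟨fun i => (hx.1 i).le, hx.2.le⟩
    · have : {x : Fin s → ℝ | (∀ i, 0 < x i) ∧ ∑ i, x i < c}
          = (⋂ i, {x : Fin s → ℝ | 0 < x i}) ∩ {x : Fin s → ℝ | ∑ i, x i < c} := by
        ext x; simp [Set.mem_iInter]
      rw [this]
      apply IsOpen.inter
      · exact isOpen_iInter_of_finite fun i => isOpen_lt continuous_const (continuous_apply i)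
      · exact isOpen_lt (continuous_finset_sum _ fun i _ => continuous_apply i) continuous_const

lemma polyDim_dilate {s : ℕ} (hs : 0 < s) {c : ℝ} (hc : 0 < c) :
    polyDim (c • stdSimplexLP s) = s := by
  unfold polyDim
  rw [affineSpan_dilate_top hs hc, AffineSubspace.direction_top]
  rw [finrank_top]
  simp

lemma notHollow_dilate {s : ℕ} (hs : 0 < s) {c : ℝ} (hc : (s:ℝ) < c) :
    ¬ IsHollow (c • stdSimplexLP s) := by
  have hc0 : 0 < c := lt_of_le_of_lt (by positivity) hc
  intro h
  refine h (fun _ => 1) ?_ (fun i => ⟨1, by norm_num⟩)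
  rw [intrinsicInterior_eq_interior_of_top (affineSpan_dilate_top hs hc0),
    interior_dilate hs hc0]
  exact ⟨fun i => one_pos, by simpa using hc⟩

lemma hollow_dilate {s : ℕ} (hs : 0 < s) {c : ℝ} (hc0 : 0 < c) (hc : c ≤ (s:ℝ)) :
    IsHollow (c • stdSimplexLP s) := by
  intro x hx hlat
  rw [intrinsicInterior_eq_interior_of_top (affineSpan_dilate_top hs hc0),
    interior_dilate hs hc0] at hx
  obtain ⟨hpos, hsum⟩ := hx
  have h1 : ∀ i, (1:ℝ) ≤ x i := by
    intro i
    obtain ⟨z, hz⟩ := hlat i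
    have hz0 : (0:ℝ) < (z:ℝ) := hz ▸ hpos i
    have : (1:ℤ) ≤ z := by exact_mod_cast hz0
    rw [hz]; exact_mod_cast this
  have hge : (s:ℝ) ≤ ∑ i, x i := by
    calc (s:ℝ) = ∑ _i : Fin s, (1:ℝ) := by simp
    _ ≤ ∑ i, x i := Finset.sum_le_sum fun i _ => h1 i
  linarith

lemma polyCodeg_two_dilate {d : ℕ} (hd : 1 ≤ d) :
    polyCodeg ((2:ℝ) • stdSimplexLP (2*d-1)) = d := by
  have hs : 0 < 2*d-1 := by omega
  have key : ∀ r : ℕ, (r:ℝ) • ((2:ℝ) • stdSimplexLP (2*d-1))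
      = ((2*r : ℝ)) • stdSimplexLP (2*d-1) := by
    intro r; rw [smul_smul]; ring_nf
  have hset : {r : ℕ | 0 < r ∧ ¬ IsHollow ((r:ℝ) • ((2:ℝ) • stdSimplexLP (2*d-1)))}
      = {r : ℕ | d ≤ r} := by
    ext r
    simp only [Set.mem_setOf_eq, key r]
    constructor
    · rintro ⟨hr0, hr⟩
      by_contra h
      push_neg at h
      apply hr
      apply hollow_dilate hs (by positivity)
      have : 2*r ≤ 2*d-1 := by omega
      calc (2*r : ℝ) = ((2*r : ℕ) : ℝ) := by push_cast; ring
      _ ≤ ((2*d-1 : ℕ) : ℝ) := by exact_mod_cast this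
    · intro hr
      refine ⟨by omega, notHollow_dilate hs ?_⟩
      have : 2*d-1 < 2*r := by omega
      calc ((2*d-1 : ℕ) : ℝ) < ((2*r : ℕ) : ℝ) := by exact_mod_cast this
      _ = (2*r : ℝ) := by push_cast; ring
  rw [polyCodeg, hset]
  apply le_antisymm
  · exact Nat.sInf_le (le_refl d)
  · exact le_csInf ⟨d, le_refl d⟩ fun b hb => hb

open Set in
lemma facet_in_hyperplane {s : ℕ} (hs : 0 < s) {c : ℝ} (hc : 0 < c) {F : Set (Fin s → ℝ)}
    (hF : IsFacet (c • stdSimplexLP s) F) :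
    (∃ j : Fin s, ∀ x ∈ F, x j = 0) ∨ (∀ x ∈ F, ∑ i, x i = c) := by
  set W : Set (Fin s → ℝ) :=
    insert 0 (Set.range fun i : Fin s => c • (Pi.single i (1:ℝ) : Fin s → ℝ)) with hWdef
  have hW : c • stdSimplexLP s = convexHull ℝ W := by
    rw [stdSimplexLP, ← convexHull_smul, hWdef, Set.smul_set_insert, smul_zero,
      ← Set.smul_set_range]
  rw [hW] at hF
  set P := convexHull ℝ W with hPdef
  obtain ⟨hexp, hne, hdim⟩ := hF
  obtain ⟨l, hFeq⟩ := hexp hne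
  obtain ⟨x₀, hx₀⟩ := hne
  have hx₀' := hFeq ▸ hx₀
  set M := l x₀ with hM
  have hx₀P : x₀ ∈ P := hx₀'.1
  have hmax : ∀ y ∈ P, l y ≤ M := hx₀'.2
  have hWP : ∀ w ∈ W, w ∈ P := fun w hw => subset_convexHull ℝ W hw
  have hFP : F ⊆ P := by rw [hFeq]; exact fun x hx => hx.1
  have hFneP : F ≠ P := by
    intro h
    rw [h] at hdim
    omega
  have hlow : ∃ w ∈ W, l w < M := by
    by_contra h
    push_neg at h
    have hsub : P ⊆ {y | M ≤ l y} :=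
      convexHull_min h (convex_halfSpace_ge (l.toLinearMap.isLinear) M)
    apply hFneP
    rw [hFeq]
    apply subset_antisymm (fun x hx => hx.1)
    intro y hy
    exact ⟨hy, fun z hz => le_trans (hmax z hz) (hsub hy)⟩
  obtain ⟨w, hwW, hww⟩ := hlow
  have hclaim : ∀ x ∈ F, x ∈ convexHull ℝ (W \ {w}) := by
    intro x hx
    have hxP : x ∈ P := hFP hx
    have hlx : l x = M := by
      have h1 := hmax x hxP
      have h2 : M ≤ l x := (hFeq ▸ hx).2 x₀ hx₀P
      linarith
    rw [hPdef, convexHull_eq] at hxP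
    obtain ⟨ι, t, wt, z, hwt0, hwt1, hzW, hcm⟩ := hxP
    rw [Finset.centerMass_eq_of_sum_1 _ _ hwt1] at hcm
    have hsumM : ∑ i ∈ t, wt i * (M - l (z i)) = 0 := by
      have : l x = ∑ i ∈ t, wt i * l (z i) := by
        rw [← hcm, map_sum]
        simp [map_smul, smul_eq_mul]
      have h2 : ∑ i ∈ t, wt i * M = M := by
        rw [← Finset.sum_mul, hwt1, one_mul]
      calc ∑ i ∈ t, wt i * (M - l (z i))
          = (∑ i ∈ t, wt i * M) - ∑ i ∈ t, wt i * l (z i) := by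
            rw [← Finset.sum_sub_distrib]; congr 1; funext i; ring
        _ = M - l x := by rw [h2, this]
        _ = 0 := by rw [hlx]; ring
    have hzero : ∀ i ∈ t, z i = w → wt i = 0 := by
      intro i hi hzi
      have := (Finset.sum_eq_zero_iff_of_nonneg ?_).1 hsumM i hi
      · rcases mul_eq_zero.1 this with h | h
        · exact h
        · exfalso; rw [hzi] at h; linarith
      · intro k hk
        have hzk : l (z k) ≤ M := hmax (z k) (hWP _ (hzW k hk))
        have := hwt0 k hk
        nlinarith
    rw [convexHull_eq]
    refine ⟨ι, t.filter (fun i => z i ≠ w), wt, z, fun i hi => hwt0 i (Finset.mem_filter.1 hi).1,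
      ?_, ?_, ?_⟩
    · rw [← hwt1]
      apply Finset.sum_subset (Finset.filter_subset _ _)
      intro i hi hni
      simp only [Finset.mem_filter, not_and, not_not] at hni
      exact hzero i hi (hni hi)
    · intro i hi
      obtain ⟨hit, hiz⟩ := Finset.mem_filter.1 hi
      exact ⟨hzW i hit, hiz⟩
    · rw [Finset.centerMass_eq_of_sum_1]
      · rw [← hcm]
        apply Finset.sum_subset (Finset.filter_subset _ _)
        intro i hi hni
        simp only [Finset.mem_filter, not_and, not_not] at hni
        rw [hzero i hi (hni hi), zero_smul]
      · rw [← hwt1]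
        apply Finset.sum_subset (Finset.filter_subset _ _)
        intro i hi hni
        simp only [Finset.mem_filter, not_and, not_not] at hni
        exact hzero i hi (hni hi)
  rcases hwW with hw0 | ⟨j, hwj⟩
  · right
    intro x hx
    have hsub : W \ {w} ⊆ {x : Fin s → ℝ | ∑ i, x i = c} := by
      rintro v ⟨hv, hvw⟩
      rcases hv with hv0 | ⟨i, hvi⟩
      · exact absurd (hv0.trans hw0.symm) hvw
      · rw [← hvi]
        simp [Pi.single_apply]
    have hlin : IsLinearMap ℝ (fun x : Fin s → ℝ => ∑ i, x i) := by
      constructor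
      · intro a b; simp [Finset.sum_add_distrib]
      · intro r a; simp [Finset.mul_sum]
    exact convexHull_min hsub (convex_hyperplane hlin c) (hclaim x hx)
  · left
    refine ⟨j, fun x hx => ?_⟩
    have hsub : W \ {w} ⊆ {x : Fin s → ℝ | x j = 0} := by
      rintro v ⟨hv, hvw⟩
      rcases hv with hv0 | ⟨i, hvi⟩
      · rw [hv0]; rfl
      · rw [← hvi]
        have hij : i ≠ j := by
          intro h
          exact hvw (by rw [← hvi, h, hwj]; exact rfl)
        simp [Pi.single_apply, hij]
    have hlin : IsLinearMap ℝ (fun x : Fin s → ℝ => x j) := by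
      constructor
      · intro a b; simp
      · intro r a; simp
    exact convexHull_min hsub (convex_hyperplane hlin 0) (hclaim x hx)

/-- Affine functional with linear part `L` and constant `a`. -/
noncomputable def affLin {s : ℕ} (L : (Fin s → ℝ) →ₗ[ℝ] ℝ) (a : ℝ) : (Fin s → ℝ) →ᵃ[ℝ] ℝ where
  toFun := fun x => L x + a
  linear := L
  map_vadd' := by
    intro p v
    simp only [vadd_eq_add, map_add]
    ring

@[simp] lemma affLin_apply {s : ℕ} (L : (Fin s → ℝ) →ₗ[ℝ] ℝ) (a : ℝ) (x : Fin s → ℝ) :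
    affLin L a x = L x + a := rfl

lemma reflexive_dilate {s : ℕ} (hs : 0 < s) :
    IsReflexivePolytope (((s:ℝ)+1) • stdSimplexLP s) := by
  have hc : (0:ℝ) < (s:ℝ)+1 := by positivity
  refine ⟨fun _ => 1, ?_, fun i => ⟨1, by norm_num⟩, ?_⟩
  · rw [intrinsicInterior_eq_interior_of_top (affineSpan_dilate_top hs hc),
      interior_dilate hs hc]
    refine ⟨fun i => one_pos, ?_⟩
    simp
  · intro F hF
    rcases facet_in_hyperplane hs hc hF with ⟨j, hj⟩ | hsum
    · refine ⟨affLin (-(LinearMap.proj j)) 1, ?_, ?_⟩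
      · intro y _ hy
        obtain ⟨z, hz⟩ := hy j
        refine ⟨1 - z, ?_⟩
        simp [LinearMap.proj_apply, hz]
        push_cast
        ring
      · intro f hf
        simp [LinearMap.proj_apply, hj f hf]
    · refine ⟨affLin (∑ i, LinearMap.proj i) 0, ?_, ?_⟩
      · intro y _ hy
        choose z hz using hy
        refine ⟨∑ i, z i, ?_⟩
        simp only [affLin_apply, LinearMap.sum_apply, LinearMap.proj_apply, add_zero]
        rw [Finset.sum_congr rfl fun i _ => hz i]
        push_cast
        ring
      · intro f hf
        simp only [affLin_apply, LinearMap.sum_apply, LinearMap.proj_apply, add_zero]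
        rw [hsum f hf]
        simp

open Set in
lemma not_cayley_dilate {d : ℕ} (hd : 1 ≤ d) :
    ¬ IsCayleyPolytope ((2:ℝ) • stdSimplexLP (2*d-1)) := by
  set s := 2*d-1 with hsdef
  have hs : 0 < s := by omega
  set P := (2:ℝ) • stdSimplexLP s with hPdef
  have hPmem : P = {x : Fin s → ℝ | (∀ i, 0 ≤ x i) ∧ ∑ i, x i ≤ 2} :=
    smul_stdSimplexLP hs two_pos
  have h0P : (0 : Fin s → ℝ) ∈ P := by
    rw [hPmem]; exact ⟨fun i => le_rfl, by norm_num⟩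
  have h2P : ∀ i : Fin s, (2:ℝ) • (Pi.single i (1:ℝ) : Fin s → ℝ) ∈ P := by
    intro i
    rw [hPmem]
    constructor
    · intro j; by_cases h : j = i <;> simp [Pi.single_apply, h]
    · simp [Pi.single_apply]
  have htop : affineSpan ℝ P = ⊤ := affineSpan_dilate_top hs two_pos
  rintro (⟨x, -, hPx⟩ | ⟨n, l, Q, hl, hQ, f, g, hfP, hgQ, hgf, hfg, hfl, hgl⟩)
  · have e0 := hPx ▸ h0P
    have e1 := hPx ▸ h2P ⟨0, hs⟩
    rw [mem_singleton_iff] at e0 e1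
    have := congrFun (e0.trans e1.symm) ⟨0, hs⟩
    simp [Pi.single_apply] at this
  · set i₀ : Fin l := ⟨0, by omega⟩ with hi₀
    set i₁ : Fin l := ⟨1, hl⟩ with hi₁
    set j₀ : Fin (n + l) := Fin.natAdd n i₀ with hj₀
    set u : (Fin s → ℝ) →ᵃ[ℝ] ℝ := (LinearMap.proj j₀).toAffineMap.comp f with hu
    have huapp : ∀ x, u x = f x j₀ := fun x => rfl
    have hint : ∀ x : Fin s → ℝ, IsLatticePt x → ∃ z : ℤ, u x = (z:ℝ) := by
      intro x hx
      obtain ⟨z, hz⟩ := hfl x (by rw [htop]; trivial) hx j₀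
      exact ⟨z, by rw [huapp, hz]⟩
    have hrange : ∀ x ∈ P, u x ∈ Set.Icc (0:ℝ) 1 := by
      intro x hx
      have hfx : f x ∈ cayley Q := hfP ▸ mem_image_of_mem f hx
      have hsub : cayley Q ⊆ {y : Fin (n+l) → ℝ | y j₀ ∈ Set.Icc (0:ℝ) 1} := by
        apply convexHull_min
        · rintro y hy
          rw [Set.mem_iUnion] at hy
          obtain ⟨i, p, hp, rfl⟩ := hy
          show Fin.append p (Pi.single i (1:ℝ)) j₀ ∈ Set.Icc (0:ℝ) 1
          rw [hj₀, Fin.append_right]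
          rw [Pi.single_apply]
          split_ifs <;> simp
        · have : {y : Fin (n+l) → ℝ | y j₀ ∈ Set.Icc (0:ℝ) 1}
              = (LinearMap.proj j₀ : (Fin (n+l) → ℝ) →ₗ[ℝ] ℝ) ⁻¹' Set.Icc (0:ℝ) 1 := rfl
          rw [this]
          exact (convex_Icc (0:ℝ) 1).linear_preimage _
      exact hsub hfx
    have hattain : ∀ i : Fin l, ∃ x ∈ P, u x = (Pi.single i (1:ℝ) : Fin l → ℝ) i₀ := by
      intro i
      obtain ⟨V, hVne, -, hQi⟩ := hQ i
      obtain ⟨p, hp⟩ := hVne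
      have hpQ : p ∈ Q i := by
        rw [hQi]; exact subset_convexHull ℝ _ hp
      set y : Fin (n+l) → ℝ := Fin.append p (Pi.single i (1:ℝ)) with hy
      have hyC : y ∈ cayley Q := by
        apply subset_convexHull ℝ _
        rw [Set.mem_iUnion]
        exact ⟨i, p, hpQ, rfl⟩
      refine ⟨g y, ?_, ?_⟩
      · rw [← hgQ]; exact mem_image_of_mem g hyC
      · rw [huapp, hfg y (mem_affineSpan ℝ hyC), hy, hj₀, Fin.append_right]
    obtain ⟨x₁, hx₁P, hu₁⟩ := hattain i₀
    obtain ⟨x₂, hx₂P, hu₂⟩ := hattain i₁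
    rw [Pi.single_apply, if_pos rfl] at hu₁
    rw [Pi.single_apply, if_neg (by simp [hi₀, hi₁, Fin.ext_iff])] at hu₂
    have hlin0 : ∀ i : Fin s, u.linear (Pi.single i (1:ℝ)) = 0 := by
      intro i
      have hlat1 : IsLatticePt (Pi.single i (1:ℝ) : Fin s → ℝ) := by
        intro j
        by_cases h : j = i
        · exact ⟨1, by simp [Pi.single_apply, h]⟩
        · exact ⟨0, by simp [Pi.single_apply, h]⟩
      obtain ⟨a, ha⟩ := hint 0 (fun _ => ⟨0, by norm_num⟩)
      obtain ⟨b, hb⟩ := hint _ hlat1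
      have hdecomp : ∀ x : Fin s → ℝ, u x = u.linear x + u 0 := by
        intro x
        have := u.map_vadd 0 x
        simpa [vadd_eq_add] using this
      have e1 : u.linear (Pi.single i (1:ℝ)) = (b:ℝ) - (a:ℝ) := by
        have := hdecomp (Pi.single i (1:ℝ))
        rw [hb, ha] at this
        linarith
      have e2 : u ((2:ℝ) • (Pi.single i (1:ℝ) : Fin s → ℝ)) = 2*((b:ℝ) - (a:ℝ)) + (a:ℝ) := by
        rw [hdecomp, map_smul, e1, ha, smul_eq_mul]
      have h2 := hrange _ (h2P i)
      have h0 := hrange _ h0P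
      rw [ha] at h0
      rw [e2] at h2
      have hba : b - a = 0 := by
        rcases h0 with ⟨h01, h02⟩
        rcases h2 with ⟨h21, h22⟩
        have hb1 : (2:ℝ)*((b:ℝ)-(a:ℝ)) ≤ 1 := by linarith
        have hb2 : (-1:ℝ) ≤ 2*((b:ℝ)-(a:ℝ)) := by linarith
        have : ((2*(b-a) : ℤ) : ℝ) ≤ 1 ∧ (-1:ℝ) ≤ ((2*(b-a) : ℤ) : ℝ) := by
          constructor <;> push_cast <;> linarith
        have h3 : (2*(b-a) : ℤ) ≤ 1 := by exact_mod_cast this.1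
        have h4 : (-1 : ℤ) ≤ 2*(b-a) := by exact_mod_cast this.2
        omega
      rw [e1]
      have : (b:ℝ) - (a:ℝ) = ((b - a : ℤ) : ℝ) := by push_cast; ring
      rw [this, hba]
      simp
    have hulin : ∀ x : Fin s → ℝ, u.linear x = 0 := by
      intro x
      rw [pi_eq_sum_univ x, map_sum]
      apply Finset.sum_eq_zero
      intro i _
      rw [map_smul]
      have : (fun j => if i = j then (1:ℝ) else 0) = (Pi.single i (1:ℝ) : Fin s → ℝ) := by
        funext j; simp [Pi.single_apply, eq_comm]
      rw [this, hlin0 i, smul_zero]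
    have hconst : u x₁ = u x₂ := by
      have d1 : u x₁ = u.linear x₁ + u 0 := by
        have := u.map_vadd 0 x₁; simpa [vadd_eq_add] using this
      have d2 : u x₂ = u.linear x₂ + u 0 := by
        have := u.map_vadd 0 x₂; simpa [vadd_eq_add] using this
      rw [d1, d2, hulin x₁, hulin x₂]
    rw [hu₁, hu₂] at hconst
    exact one_ne_zero hconst

/-- For `d ≥ 1`, the simplex `2 Δ_{2d-1}` is a Gorenstein polytope of dimension `2d - 1`
and degree `d` that is not a Cayley polytope. -/
theorem stmt9 (d : ℕ) (hd : 1 ≤ d) :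
    IsGorenstein ((2 : ℝ) • stdSimplexLP (2 * d - 1)) ∧
    polyDim ((2 : ℝ) • stdSimplexLP (2 * d - 1)) = 2 * d - 1 ∧
    polyDeg ((2 : ℝ) • stdSimplexLP (2 * d - 1)) = d ∧
    ¬ IsCayleyPolytope ((2 : ℝ) • stdSimplexLP (2 * d - 1)) := by
  have hs : 0 < 2 * d - 1 := by omega
  refine ⟨⟨d, hd, ?_⟩, polyDim_dilate hs two_pos, ?_, not_cayley_dilate hd⟩
  · have heq : (d:ℝ) • ((2:ℝ) • stdSimplexLP (2*d-1))
        = (((2*d-1 : ℕ):ℝ) + 1) • stdSimplexLP (2*d-1) := by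
      rw [smul_smul]
      congr 1
      rw [Nat.cast_sub (by omega : 1 ≤ 2*d)]
      push_cast
      ring
    rw [heq]
    exact reflexive_dilate hs
  · rw [polyDeg, polyCodeg_two_dilate hd, polyDim_dilate hs two_pos]
    omega
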